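/- Let φ ∈ C(Ω̄ × Ī) and let m_ε be the rescaled layer measure with m_ε ⇀* n L³⌊Ω. Then lim_{ε→0} ∫_Ω |φ(x, y_ε(x₃)/r_ε)|² dm_ε = ∫_{Ω×I} |φ(x, y₃)|² n dx dy₃. -/

import Mathlib

open MeasureTheory Set Filter Topology Bornology Classical

noncomputable section

/-- Projection of a point of `ℝ³` onto its first two coordinates. -/
def proj2 (x : Fin 3 → ℝ) : Fin 2 → ℝ := fun i => x i.castSucc

/-- Euclidean dot product on `ℝ³`. -/
def dot3 (u v : Fin 3 → ℝ) : ℝ := ∑ i, u i * v i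

/-- Squared Euclidean norm on `ℝ³`. -/
def nsq3 (u : Fin 3 → ℝ) : ℝ := ∑ i, (u i) ^ 2

/-- Entries of the symmetrized gradient `e(u) = (∇u + ∇uᵀ)/2` of a vector field on `ℝ³`. -/
def symGrad (u : (Fin 3 → ℝ) → Fin 3 → ℝ) (x : Fin 3 → ℝ) (i j : Fin 3) : ℝ :=
  (fderiv ℝ u x (Pi.single j 1) i + fderiv ℝ u x (Pi.single i 1) j) / 2

/-- Squared Frobenius norm of the symmetrized gradient. -/
def symGradSq (u : (Fin 3 → ℝ) → Fin 3 → ℝ) (x : Fin 3 → ℝ) : ℝ :=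
  ∑ i, ∑ j, (symGrad u x i j) ^ 2

/-- The cylinder `Ω = Ω' × (0,L) ⊂ ℝ³`. -/
def OmegaSet (Ω' : Set (Fin 2 → ℝ)) (L : ℝ) : Set (Fin 3 → ℝ) :=
  {x | proj2 x ∈ Ω' ∧ x 2 ∈ Set.Ioo 0 L}

/-- The union of layers `B_ε = ⋃_j Ω' × (ω_ε^j + r_ε I)`, `I = (-1/2,1/2)`. -/
def layerSet (Ω' : Set (Fin 2 → ℝ)) (ω : Finset ℝ) (r : ℝ) : Set (Fin 3 → ℝ) :=
  {x | proj2 x ∈ Ω' ∧ ∃ c ∈ ω, |x 2 - c| < r / 2}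

/-- The rescaled layer measure `m_ε = (ε/r_ε) 1_{B_ε} ℒ³⌊Ω`. -/
def layerMeasure (Ω' : Set (Fin 2 → ℝ)) (ω : Finset ℝ) (ε r : ℝ) :
    Measure (Fin 3 → ℝ) :=
  (ENNReal.ofReal (ε / r)) • volume.restrict (layerSet Ω' ω r)

/-- Geometric hypotheses on the layers: `ω_ε ⊂ (0,L)`, minimal interpoint distance `ε`,
distance `> ε/2` to `{0,L}`, and `r_ε (1+δ) < ε`. -/
def GoodLayers (L ε r δ : ℝ) (ω : Finset ℝ) : Prop :=
  0 < L ∧ 0 < ε ∧ 0 < r ∧ 0 < δ ∧ r * (1 + δ) < ε ∧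
  (∀ a ∈ ω, a ∈ Set.Ioo 0 L) ∧
  (∀ a ∈ ω, ∀ b ∈ ω, a ≠ b → ε ≤ |a - b|) ∧
  (∀ a ∈ ω, ε / 2 < a ∧ a < L - ε / 2)

/-- The rescaled layer-counting function `n_ε`. -/
def countFn (L ε : ℝ) (ω : Finset ℝ) (x3 : ℝ) : ℝ :=
  ∑' i : ℤ,
    if Set.Ioc (ε * i - ε / 2) (ε * i + ε / 2) ⊆ Set.Ioo 0 L then
      ((ω.filter (fun a => ε * i - ε / 2 < a ∧ a ≤ ε * i + ε / 2)).card : ℝ)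
        * Set.indicator (Set.Ioo (ε * i - ε / 2) (ε * i + ε / 2)) (fun _ => (1 : ℝ)) x3
    else 0

/-- Weak-* convergence in `L^∞(Ω)` of the counting functions `n_ε` to `n`. -/
def NConv (Ω' : Set (Fin 2 → ℝ)) (L : ℝ) (ε : ℕ → ℝ) (ω : ℕ → Finset ℝ)
    (n : (Fin 3 → ℝ) → ℝ) : Prop :=
  ∀ g : (Fin 3 → ℝ) → ℝ, Integrable g (volume.restrict (OmegaSet Ω' L)) →
    Tendsto (fun k => ∫ x in OmegaSet Ω' L, countFn L (ε k) (ω k) (x 2) * g x)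
      atTop (𝓝 (∫ x in OmegaSet Ω' L, n x * g x))

/-- The local vertical coordinate `y_ε` inside the (dilated) layers. -/
def yFn (r δ : ℝ) (ω : Finset ℝ) (z : ℝ) : ℝ :=
  ∑ c ∈ ω, (z - c) *
    Set.indicator (Set.Ioo (c - r * (1 + δ) / 2) (c + r * (1 + δ) / 2))
      (fun _ => (1 : ℝ)) z

/-!
On each vertical line `{x'} × (0, L)` the substitution `t = c + r_ε y` turns the `m_ε`-integral
over the layer centred at `c` into `ε ∫_I φ(x', c + r_ε y, y)² dy`, while the `n_ε`-integral
over the cell of `εℤ` containing `c` is the integral of `g(t) = ∫_I φ(x', t, y)² dy` over an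
interval of length `ε` whose points are within `2ε` of `c`. By uniform continuity of `φ²` on the
compact set `Ω̄ × Ī`, the two agree up to `η ε` for every layer; there are at most `L / ε` layers,
and at most one of them has a cell leaving `(0, L)`, so the two integrals over `Ω` differ by
`O(η + ε)`. The weak-* convergence `n_ε ⇀ n`, tested against `g`, gives the limit.
-/

local notation "I" => Set.Ioo (-(1 / 2) : ℝ) (1 / 2)

section Analysis

lemma abs_setIntegral_Ioo_le {f : ℝ → ℝ} {a b C : ℝ} (hab : a ≤ b)
    (hC : ∀ x ∈ Ioo a b, |f x| ≤ C) : |∫ x in Ioo a b, f x| ≤ C * (b - a) := by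
  simpa [measureReal_def, Real.volume_Ioo, hab] using
    norm_setIntegral_le_of_norm_le_const (μ := volume) (f := f) measure_Ioo_lt_top hC

lemma setIntegral_Ioo_comp_div (G : ℝ → ℝ → ℝ) {r : ℝ} (hr : 0 < r) (c : ℝ) :
    ∫ t in Ioo (c - r / 2) (c + r / 2), G t ((t - c) / r)
      = r * ∫ y in I, G (c + r * y) y := by
  have key := intervalIntegral.integral_comp_add_mul (a := -(1 / 2)) (b := 1 / 2)
    (fun t => G t ((t - c) / r)) hr.ne' c
  have hsimp : ∀ y, (c + r * y - c) / r = y := fun y => by field_simp; ring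
  simp only [hsimp] at key
  rw [intervalIntegral.integral_of_le (by norm_num), integral_Ioc_eq_integral_Ioo,
    intervalIntegral.integral_of_le (by linarith), integral_Ioc_eq_integral_Ioo] at key
  rw [key, smul_eq_mul, ← mul_assoc, mul_inv_cancel₀ hr.ne', one_mul]
  congr 3 <;> ring

lemma continuous_setIntegral_Ioo {X : Type*} [TopologicalSpace X] [FirstCountableTopology X]
    [LocallyCompactSpace X] {F : X → ℝ → ℝ} (hF : Continuous (Function.uncurry F)) (a b : ℝ) :
    Continuous fun x => ∫ y in Ioo a b, F x y := by
  simpa only [integral_Icc_eq_integral_Ioo] using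
    continuous_parametric_integral_of_continuous (μ := volume) hF isCompact_Icc

lemma exists_abs_le_of_isBounded {X : Type*} [PseudoMetricSpace X] [ProperSpace X]
    {f : X → ℝ} (hf : Continuous f) {s : Set X} (hs : IsBounded s) :
    ∃ M, 0 ≤ M ∧ ∀ x ∈ s, |f x| ≤ M := by
  obtain ⟨M, hM⟩ := hs.isCompact_closure.exists_bound_of_continuousOn hf.continuousOn
  exact ⟨max M 0, le_max_right _ _, fun x hx => (hM x (subset_closure hx)).trans (le_max_left _ _)⟩

lemma exists_pos_forall_dist_lt_of_isBounded {X : Type*} [PseudoMetricSpace X] [ProperSpace X]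
    {f : X → ℝ} (hf : Continuous f) {s : Set X} (hs : IsBounded s) {η : ℝ} (hη : 0 < η) :
    ∃ d > 0, ∀ x ∈ s, ∀ z ∈ s, dist x z < d → |f x - f z| < η := by
  obtain ⟨d, hd, hfd⟩ := Metric.uniformContinuousOn_iff.1
    (hs.isCompact_closure.uniformContinuousOn_of_continuous hf.continuousOn) η hη
  exact ⟨d, hd, fun x hx z hz hxz => hfd x (subset_closure hx) z (subset_closure hz) hxz⟩

lemma tendsto_zero_of_forall_eventually_abs_le {α : Type*} {l : Filter α} {u a : α → ℝ}
    (ha : Tendsto a l (𝓝 0)) (C : ℝ) (h : ∀ η > 0, ∀ᶠ k in l, |u k| ≤ C * η + a k) :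
    Tendsto u l (𝓝 0) := by
  rw [Metric.tendsto_nhds]
  intro e he
  have hη : 0 < e / (2 * (|C| + 1)) := by positivity
  have hCη : C * (e / (2 * (|C| + 1))) < e / 2 := by
    rw [mul_div_assoc', div_lt_div_iff₀ (by positivity) two_pos]
    nlinarith [le_abs_self C]
  filter_upwards [h _ hη, ha.eventually (gt_mem_nhds (half_pos he))] with k hk hak
  rw [Real.dist_eq, sub_zero]
  linarith

end Analysis

section Cylinder

variable {n : ℕ}

def cylinderSet (S : Set (Fin n → ℝ)) (D : Set ℝ) : Set (Fin (n + 1) → ℝ) :=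
  {x | Fin.init x ∈ S ∧ x (Fin.last n) ∈ D}

def snocMeasurableEquiv (n : ℕ) : ℝ × (Fin n → ℝ) ≃ᵐ (Fin (n + 1) → ℝ) :=
  (MeasurableEquiv.piFinSuccAbove (fun _ => ℝ) (Fin.last n)).symm

@[simp]
lemma snocMeasurableEquiv_apply (p : ℝ × (Fin n → ℝ)) :
    snocMeasurableEquiv n p = Fin.snoc p.2 p.1 :=
  Fin.insertNth_last' _ _

lemma measurePreserving_snocMeasurableEquiv :
    MeasurePreserving (snocMeasurableEquiv n) (volume.prod volume) volume :=
  (volume_preserving_piFinSuccAbove (fun _ : Fin (n + 1) => ℝ) (Fin.last n)).symm _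

@[simp]
lemma snoc_mem_cylinderSet {S : Set (Fin n → ℝ)} {D : Set ℝ} {x' : Fin n → ℝ} {t : ℝ} :
    (Fin.snoc x' t : Fin (n + 1) → ℝ) ∈ cylinderSet S D ↔ x' ∈ S ∧ t ∈ D := by
  simp [cylinderSet]

lemma preimage_snocMeasurableEquiv_cylinderSet (S : Set (Fin n → ℝ)) (D : Set ℝ) :
    snocMeasurableEquiv n ⁻¹' cylinderSet S D = D ×ˢ S := by
  ext ⟨t, x'⟩
  simp [and_comm]

lemma measurableSet_cylinderSet {S : Set (Fin n → ℝ)} {D : Set ℝ} (hS : MeasurableSet S)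
    (hD : MeasurableSet D) : MeasurableSet (cylinderSet S D) :=
  (measurable_pi_lambda _ fun _ => measurable_pi_apply _) hS |>.inter
    (measurable_pi_apply _ hD)

lemma isBounded_cylinderSet {S : Set (Fin n → ℝ)} {D : Set ℝ} (hS : IsBounded S)
    (hD : IsBounded D) : IsBounded (cylinderSet S D) := by
  refine forall_isBounded_image_eval_iff.1 fun i => ?_
  induction i using Fin.lastCases with
  | last => exact hD.subset (image_subset_iff.2 fun x hx => hx.2)
  | cast j => exact (hS.image_eval j).subset (image_subset_iff.2 fun x hx => ⟨_, hx.1, rfl⟩)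

lemma dist_snoc_snoc_le (x' : Fin n → ℝ) (s t : ℝ) :
    dist (Fin.snoc x' s : Fin (n + 1) → ℝ) (Fin.snoc x' t) ≤ dist s t := by
  refine (dist_pi_le_iff dist_nonneg).2 fun i => ?_
  induction i using Fin.lastCases with
  | last => simp
  | cast j => simp

variable {E : Type*} [NormedAddCommGroup E]

lemma integrable_comp_snoc_of_integrableOn_cylinderSet {S : Set (Fin n → ℝ)} {D : Set ℝ}
    {F : (Fin (n + 1) → ℝ) → E} (hF : IntegrableOn F (cylinderSet S D)) :
    Integrable (fun p : ℝ × (Fin n → ℝ) => F (Fin.snoc p.2 p.1))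
      ((volume.restrict D).prod (volume.restrict S)) := by
  rw [← measurePreserving_snocMeasurableEquiv.integrableOn_comp_preimage
      (snocMeasurableEquiv n).measurableEmbedding,
    preimage_snocMeasurableEquiv_cylinderSet] at hF
  simp only [Function.comp_def, snocMeasurableEquiv_apply] at hF
  rwa [Measure.prod_restrict]

variable [NormedSpace ℝ E]

lemma setIntegral_cylinderSet {S : Set (Fin n → ℝ)} {D : Set ℝ} {F : (Fin (n + 1) → ℝ) → E}
    (hF : IntegrableOn F (cylinderSet S D)) :
    ∫ x in cylinderSet S D, F x = ∫ x' in S, ∫ t in D, F (Fin.snoc x' t) := by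
  rw [← measurePreserving_snocMeasurableEquiv.setIntegral_preimage_emb
      (snocMeasurableEquiv n).measurableEmbedding,
    preimage_snocMeasurableEquiv_cylinderSet, ← Measure.prod_restrict]
  simpa using integral_prod_symm _ (integrable_comp_snoc_of_integrableOn_cylinderSet hF)

lemma integrableOn_setIntegral_cylinderSet {S : Set (Fin n → ℝ)} {D : Set ℝ}
    {F : (Fin (n + 1) → ℝ) → E} (hF : IntegrableOn F (cylinderSet S D)) :
    IntegrableOn (fun x' => ∫ t in D, F (Fin.snoc x' t)) S :=
  (integrable_comp_snoc_of_integrableOn_cylinderSet hF).integral_prod_right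

end Cylinder

lemma OmegaSet_eq_cylinderSet (Ω' : Set (Fin 2 → ℝ)) (L : ℝ) :
    OmegaSet Ω' L = cylinderSet Ω' (Ioo 0 L) := rfl

lemma layerSet_eq_cylinderSet (Ω' : Set (Fin 2 → ℝ)) (ω : Finset ℝ) (r : ℝ) :
    layerSet Ω' ω r = cylinderSet Ω' {t | ∃ c ∈ ω, |t - c| < r / 2} := rfl

@[simp]
lemma snoc_apply_two (x' : Fin 2 → ℝ) (t : ℝ) : (Fin.snoc x' t : Fin 3 → ℝ) 2 = t :=
  Fin.snoc_last _ _

section Cells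

/-- The index `i` of the cell `(ε i - ε/2, ε i + ε/2]` of `εℤ` containing `t`. -/
def cellIndex (ε t : ℝ) : ℤ := ⌈t / ε - 1 / 2⌉

lemma mem_Ioc_iff_cellIndex_eq {ε : ℝ} (hε : 0 < ε) {t : ℝ} {i : ℤ} :
    t ∈ Ioc (ε * i - ε / 2) (ε * i + ε / 2) ↔ cellIndex ε t = i := by
  obtain ⟨u, rfl⟩ : ∃ u, t = ε * u := ⟨t / ε, by field_simp⟩
  rw [cellIndex, Int.ceil_eq_iff, mem_Ioc, mul_div_cancel_left₀ _ hε.ne']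
  constructor <;> rintro ⟨h1, h2⟩ <;> constructor <;> nlinarith

lemma mem_Ioc_cellIndex {ε : ℝ} (hε : 0 < ε) (t : ℝ) :
    t ∈ Ioc (ε * cellIndex ε t - ε / 2) (ε * cellIndex ε t + ε / 2) :=
  (mem_Ioc_iff_cellIndex_eq hε).2 rfl

def CellInside (L ε c : ℝ) : Prop :=
  Ioc (ε * cellIndex ε c - ε / 2) (ε * cellIndex ε c + ε / 2) ⊆ Ioo 0 L

def openCell (ε c : ℝ) : Set ℝ :=
  Ioo (ε * cellIndex ε c - ε / 2) (ε * cellIndex ε c + ε / 2)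

lemma measurableSet_openCell (ε c : ℝ) : MeasurableSet (openCell ε c) := measurableSet_Ioo

lemma CellInside.openCell_subset {L ε c : ℝ} (h : CellInside L ε c) :
    openCell ε c ⊆ Ioo 0 L :=
  Ioo_subset_Ioc_self.trans h

variable (L : ℝ) {ε : ℝ} (hε : 0 < ε) (ω : Finset ℝ)
include hε

/-- Each `c ∈ ω` is counted in exactly one term of the series defining `countFn`. -/
lemma countFn_eq_sum (t : ℝ) :
    countFn L ε ω t
      = ∑ c ∈ ω with CellInside L ε c, (openCell ε c).indicator (fun _ => (1 : ℝ)) t := by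
  set G : ℤ → ℝ := fun i => if Ioc (ε * i - ε / 2) (ε * i + ε / 2) ⊆ Ioo 0 L then
    (Ioo (ε * i - ε / 2) (ε * i + ε / 2)).indicator (fun _ => (1 : ℝ)) t else 0
  have hterm : ∀ i : ℤ, (if Ioc (ε * i - ε / 2) (ε * i + ε / 2) ⊆ Ioo 0 L then
      ((ω.filter (fun a => ε * i - ε / 2 < a ∧ a ≤ ε * i + ε / 2)).card : ℝ)
        * (Ioo (ε * i - ε / 2) (ε * i + ε / 2)).indicator (fun _ => (1 : ℝ)) t else 0)
      = ∑ c ∈ ω, if i = cellIndex ε c then G i else 0 := by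
    intro i
    rw [Finset.natCast_card_filter, Finset.sum_mul]
    by_cases hsub : Ioc (ε * i - ε / 2) (ε * i + ε / 2) ⊆ Ioo 0 L
    · simp only [G, hsub, if_true, ite_mul, one_mul, zero_mul]
      exact Finset.sum_congr rfl fun c _ =>
        if_congr ((mem_Ioc_iff_cellIndex_eq hε).trans eq_comm) rfl rfl
    · simp [G, hsub]
  have hsummable : ∀ c ∈ ω, Summable fun i => if i = cellIndex ε c then G i else 0 :=
    fun c _ => (hasSum_single (cellIndex ε c) fun i hi => if_neg hi).summable
  rw [countFn, tsum_congr hterm, Summable.tsum_finsetSum hsummable, Finset.sum_filter]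
  simp only [tsum_ite_eq]
  rfl

lemma measurable_countFn : Measurable (countFn L ε ω) := by
  rw [funext (countFn_eq_sum L hε ω)]
  exact Finset.measurable_sum _ fun c _ => measurable_const.indicator (measurableSet_openCell ε c)

lemma abs_countFn_le (t : ℝ) : |countFn L ε ω t| ≤ ω.card := by
  rw [countFn_eq_sum L hε ω]
  refine (Finset.abs_sum_le_sum_abs _ _).trans <|
    (Finset.sum_le_card_nsmul _ _ 1 fun c _ => ?_).trans ?_
  · by_cases ht : t ∈ openCell ε c <;> simp [ht]
  · simpa using Finset.card_filter_le _ _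

lemma integral_countFn_mul_eq_sum {f : ℝ → ℝ} (hf : IntegrableOn f (Ioo 0 L)) :
    ∫ t in Ioo 0 L, countFn L ε ω t * f t
      = ∑ c ∈ ω with CellInside L ε c, ∫ t in openCell ε c, f t := by
  have hind : ∀ t, countFn L ε ω t * f t
      = ∑ c ∈ ω with CellInside L ε c, (openCell ε c).indicator f t := by
    intro t
    rw [countFn_eq_sum L hε, Finset.sum_mul]
    refine Finset.sum_congr rfl fun c _ => ?_
    by_cases ht : t ∈ openCell ε c <;> simp [ht]
  simp only [hind]
  rw [integral_finsetSum _ fun c _ => hf.indicator (measurableSet_openCell ε c)]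
  refine Finset.sum_congr rfl fun c hc => ?_
  rw [integral_indicator (measurableSet_openCell ε c),
    Measure.restrict_restrict (measurableSet_openCell ε c),
    inter_eq_left.2 (Finset.mem_filter.1 hc).2.openCell_subset]

end Cells

lemma integrableOn_countFn_mul (L : ℝ) {ε : ℝ} (hε : 0 < ε) (ω : Finset ℝ)
    {Ω' : Set (Fin 2 → ℝ)} (hΩ'b : IsBounded Ω') {g : (Fin 3 → ℝ) → ℝ} (hg : Continuous g) :
    IntegrableOn (fun x => countFn L ε ω (x 2) * g x) (OmegaSet Ω' L) :=
  Integrable.bdd_mul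
    ((hg.continuousOn.integrableOn_compact
      (isBounded_cylinderSet hΩ'b (Metric.isBounded_Ioo 0 L)).isCompact_closure).mono_set
      subset_closure)
    ((measurable_countFn L hε ω).comp (measurable_pi_apply 2)).aestronglyMeasurable
    (ae_of_all _ fun x => abs_countFn_le L hε ω (x 2))

section Layers

lemma setOf_exists_abs_sub_lt (ω : Finset ℝ) (ρ : ℝ) :
    {t | ∃ c ∈ ω, |t - c| < ρ} = ⋃ c ∈ ω, Ioo (c - ρ) (c + ρ) := by
  ext t
  simp only [mem_ofPred_eq, mem_iUnion, exists_prop, ← Real.ball_eq_Ioo, Metric.mem_ball,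
    Real.dist_eq]

lemma measurable_yFn (r δ : ℝ) (ω : Finset ℝ) : Measurable (yFn r δ ω) :=
  Finset.measurable_sum _ fun c _ =>
    (measurable_id.sub_const c).mul (measurable_const.indicator measurableSet_Ioo)

variable {L ε r δ : ℝ} {ω : Finset ℝ}

lemma pairwiseDisjoint_Ioo_of_le (hsep : ∀ a ∈ ω, ∀ b ∈ ω, a ≠ b → ε ≤ |a - b|) {ρ : ℝ}
    (hρ : ρ ≤ ε) : (ω : Set ℝ).PairwiseDisjoint fun c => Ioo (c - ρ / 2) (c + ρ / 2) := by
  intro a ha b hb hab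
  refine Set.disjoint_left.2 fun t hta htb => ?_
  have := hsep a ha b hb hab
  rw [mem_Ioo] at hta htb
  cases abs_cases (a - b) <;> linarith

namespace GoodLayers

variable (h : GoodLayers L ε r δ ω)
include h

lemma r_lt : r < ε := by
  have ⟨_, _, hr, hδ, hrδ, _⟩ := h
  nlinarith

/-- The intervals `(c - ε/2, c + ε/2)`, `c ∈ ω`, are disjoint and lie in `(0, L)`. -/
lemma card_mul_le : (ω.card : ℝ) * ε ≤ L := by
  have ⟨hL, hε, _, _, _, _, hsep, hpos⟩ := h
  have hsub : (⋃ c ∈ ω, Ioo (c - ε / 2) (c + ε / 2)) ⊆ Ioo 0 L := by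
    refine iUnion₂_subset fun c hc t ht => ?_
    have := hpos c hc
    rw [mem_Ioo] at ht ⊢
    constructor <;> linarith
  have hvol := measure_mono (μ := volume) hsub
  rw [measure_biUnion_finset (pairwiseDisjoint_Ioo_of_le hsep le_rfl)
    (fun _ _ => measurableSet_Ioo)] at hvol
  simp only [Real.volume_Ioo, add_sub_sub_cancel, add_halves, Finset.sum_const, nsmul_eq_mul,
    sub_zero] at hvol
  rwa [← ENNReal.ofReal_natCast, ← ENNReal.ofReal_mul (by positivity),
    ENNReal.ofReal_le_ofReal_iff hL.le] at hvol

lemma lt_of_not_cellInside {c : ℝ} (hc : c ∈ ω) (hout : ¬ CellInside L ε c) :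
    L - 3 * ε / 2 < c := by
  have ⟨_, hε, _, _, _, _, _, hpos⟩ := h
  obtain ⟨hc₁, hc₂⟩ := hpos c hc
  obtain ⟨hi₁, hi₂⟩ := mem_Ioc_cellIndex hε c
  have hi : (1 : ℝ) ≤ cellIndex ε c := by
    have : (0 : ℝ) < cellIndex ε c := pos_of_mul_pos_right (by linarith) hε.le
    exact_mod_cast (Int.cast_pos.1 this : 0 < cellIndex ε c)
  by_contra! hc'
  refine hout fun t ht => ⟨?_, ?_⟩ <;> [nlinarith [ht.1]; linarith [ht.2]]

lemma card_filter_not_cellInside_le_one :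
    (ω.filter fun c => ¬ CellInside L ε c).card ≤ 1 := by
  have ⟨_, _, _, _, _, _, hsep, hpos⟩ := h
  refine Finset.card_le_one.2 fun a ha b hb => ?_
  rw [Finset.mem_filter] at ha hb
  by_contra hab
  have := hsep a ha.1 b hb.1 hab
  have := h.lt_of_not_cellInside ha.1 ha.2
  have := h.lt_of_not_cellInside hb.1 hb.2
  have := (hpos a ha.1).2
  have := (hpos b hb.1).2
  cases abs_cases (a - b) <;> linarith

lemma yFn_eq {c t : ℝ} (hc : c ∈ ω) (ht : |t - c| < r / 2) : yFn r δ ω t = t - c := by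
  have ⟨_, _, hr, hδ, hrε, _, hsep, _⟩ := h
  have hdil : ∀ b, |t - b| < r / 2 → t ∈ Ioo (b - r * (1 + δ) / 2) (b + r * (1 + δ) / 2) :=
    fun b hb => by
      rw [abs_sub_lt_iff] at hb
      constructor <;> nlinarith
  rw [yFn, Finset.sum_eq_single_of_mem c hc, indicator_of_mem (hdil c ht), mul_one]
  intro b hb hbc
  have hdisj := pairwiseDisjoint_Ioo_of_le hsep hrε.le hb hc hbc
  rw [indicator_of_notMem (Set.disjoint_right.1 hdisj (hdil c ht)), mul_zero]

lemma add_mul_mem_Ioo {c y : ℝ} (hc : c ∈ ω) (hy : y ∈ I) : c + r * y ∈ Ioo 0 L := by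
  have ⟨_, _, hr, _, _, _, _, hpos⟩ := h
  have := h.r_lt
  obtain ⟨hc₁, hc₂⟩ := hpos c hc
  obtain ⟨hy₁, hy₂⟩ := hy
  constructor <;> nlinarith

lemma integral_layers_eq_sum (F : ℝ → ℝ → ℝ) (hF : Continuous (Function.uncurry F)) :
    ∫ t in {t | ∃ c ∈ ω, |t - c| < r / 2}, F t (yFn r δ ω t / r)
      = ∑ c ∈ ω, r * ∫ y in I, F (c + r * y) y := by
  have ⟨_, _, hr, _, _, _, hsep, _⟩ := h
  have hlayer : ∀ c ∈ ω, EqOn (fun t => F t (yFn r δ ω t / r)) (fun t => F t ((t - c) / r))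
      (Ioo (c - r / 2) (c + r / 2)) := fun c hc t ht => by
    rw [← Real.ball_eq_Ioo, Metric.mem_ball, Real.dist_eq] at ht
    simp only [h.yFn_eq hc ht]
  rw [setOf_exists_abs_sub_lt, integral_biUnion_finset ω (fun _ _ => measurableSet_Ioo)
    (pairwiseDisjoint_Ioo_of_le hsep h.r_lt.le)]
  · refine Finset.sum_congr rfl fun c hc => ?_
    rw [setIntegral_congr_fun measurableSet_Ioo (hlayer c hc), setIntegral_Ioo_comp_div F hr c]
  · intro c hc
    have hcont : Continuous fun t => F t ((t - c) / r) :=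
      hF.comp (f := fun t => (t, (t - c) / r)) (by fun_prop)
    exact (hcont.integrableOn_Icc.mono_set Ioo_subset_Icc_self).congr_fun (hlayer c hc).symm
      measurableSet_Ioo

/-- `hη` applies because `|c + r y - t| ≤ 2ε` for `t` in the cell of `c` and `y ∈ I`. -/
lemma abs_mul_sub_integral_openCell_le {F : ℝ → ℝ → ℝ} (hF : Continuous (Function.uncurry F))
    {η : ℝ}
    (hη : ∀ s ∈ Ioo 0 L, ∀ t ∈ Ioo 0 L, |s - t| ≤ 2 * ε → ∀ y ∈ I, |F s y - F t y| ≤ η)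
    {c : ℝ} (hc : c ∈ ω) (hin : CellInside L ε c) :
    |ε * (∫ y in I, F (c + r * y) y) - ∫ t in openCell ε c, ∫ y in I, F t y| ≤ η * ε := by
  have ⟨_, hε, hr, _, _, _, _, _⟩ := h
  have hcont : ∀ g : ℝ → ℝ, Continuous g → ∀ a b, IntegrableOn g (Ioo a b) :=
    fun g hg a b => hg.integrableOn_Icc.mono_set Ioo_subset_Icc_self
  have hslice : ∀ t, Continuous fun y => F t y := fun t =>
    hF.comp (f := fun y => (t, y)) (by fun_prop)
  have hshift : Continuous fun y => F (c + r * y) y :=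
    hF.comp (f := fun y => (c + r * y, y)) (by fun_prop)
  have hpt : ∀ t ∈ openCell ε c, |(∫ y in I, F (c + r * y) y) - ∫ y in I, F t y| ≤ η := by
    intro t ht
    obtain ⟨hc₁, hc₂⟩ := mem_Ioc_cellIndex hε c
    obtain ⟨ht₁, ht₂⟩ := ht
    rw [← integral_sub (hcont _ hshift _ _) (hcont _ (hslice t) (-(1 / 2)) (1 / 2))]
    refine (abs_setIntegral_Ioo_le (C := η) (by norm_num) fun y hy => ?_).trans (by norm_num)
    refine hη _ (h.add_mul_mem_Ioo hc hy) t (hin.openCell_subset ⟨ht₁, ht₂⟩) ?_ y hy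
    have := h.r_lt
    obtain ⟨hy₁, hy₂⟩ := hy
    rw [abs_le]
    constructor <;> nlinarith
  have hvol : volume.real (openCell ε c) = ε := by
    rw [openCell, Real.volume_real_Ioo_of_le (by linarith)]
    ring
  have hconst : ε * (∫ y in I, F (c + r * y) y)
      = ∫ _ in openCell ε c, ∫ y in I, F (c + r * y) y := by
    rw [setIntegral_const, hvol, smul_eq_mul]
  have hJint : IntegrableOn (fun _ => ∫ y in I, F (c + r * y) y) (openCell ε c) :=
    integrableOn_const measure_Ioo_lt_top.ne
  rw [hconst, ← integral_sub hJint (hcont _ (continuous_setIntegral_Ioo hF _ _) _ _)]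
  simpa [openCell] using abs_setIntegral_Ioo_le (by linarith) hpt

lemma abs_integral_layers_sub_integral_countFn_le {F : ℝ → ℝ → ℝ}
    (hF : Continuous (Function.uncurry F)) {M η : ℝ} (hM0 : 0 ≤ M) (hη0 : 0 ≤ η)
    (hM : ∀ s ∈ Ioo 0 L, ∀ y ∈ I, |F s y| ≤ M)
    (hη : ∀ s ∈ Ioo 0 L, ∀ t ∈ Ioo 0 L, |s - t| ≤ 2 * ε → ∀ y ∈ I, |F s y - F t y| ≤ η) :
    |ε / r * (∫ t in {t | ∃ c ∈ ω, |t - c| < r / 2}, F t (yFn r δ ω t / r))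
      - ∫ t in Ioo 0 L, countFn L ε ω t * ∫ y in I, F t y| ≤ L * η + ε * M := by
  have ⟨_, hε, hr, _, _, _, _, _⟩ := h
  set J : ℝ → ℝ := fun c => ∫ y in I, F (c + r * y) y
  have hf := continuous_setIntegral_Ioo hF (-(1 / 2)) (1 / 2)
  rw [h.integral_layers_eq_sum F hF,
    integral_countFn_mul_eq_sum L hε ω (hf.integrableOn_Icc.mono_set Ioo_subset_Icc_self)]
  have hsplit : ε / r * ∑ c ∈ ω, r * J c
      = ∑ c ∈ ω with CellInside L ε c, ε * J c + ∑ c ∈ ω with ¬ CellInside L ε c, ε * J c := by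
    rw [Finset.sum_filter_add_sum_filter_not, Finset.mul_sum]
    exact Finset.sum_congr rfl fun c _ => by field_simp
  have hbad : ∀ c ∈ ω, |ε * J c| ≤ ε * M := fun c hc => by
    rw [abs_mul, abs_of_pos hε]
    gcongr
    exact (abs_setIntegral_Ioo_le (C := M) (by norm_num) fun y hy =>
      hM _ (h.add_mul_mem_Ioo hc hy) y hy).trans (by norm_num)
  have hgood_card : ((ω.filter fun c => CellInside L ε c).card : ℝ) ≤ ω.card := by
    exact_mod_cast Finset.card_filter_le _ _
  have hbad_card : ((ω.filter fun c => ¬ CellInside L ε c).card : ℝ) ≤ 1 := by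
    exact_mod_cast h.card_filter_not_cellInside_le_one
  rw [hsplit, add_sub_right_comm, ← Finset.sum_sub_distrib]
  calc _ ≤ ∑ c ∈ ω with CellInside L ε c, |ε * J c - ∫ t in openCell ε c, ∫ y in I, F t y|
        + ∑ c ∈ ω with ¬ CellInside L ε c, |ε * J c| :=
        (abs_add_le _ _).trans
          (add_le_add (Finset.abs_sum_le_sum_abs _ _) (Finset.abs_sum_le_sum_abs _ _))
    _ ≤ ∑ c ∈ ω with CellInside L ε c, η * ε + ∑ c ∈ ω with ¬ CellInside L ε c, ε * M := by
        gcongr with c hc c hc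
        · exact h.abs_mul_sub_integral_openCell_le hF hη (Finset.mem_filter.1 hc).1
            (Finset.mem_filter.1 hc).2
        · exact hbad c (Finset.mem_filter.1 hc).1
    _ ≤ L * η + ε * M := by
        simp only [Finset.sum_const, nsmul_eq_mul]
        nlinarith [mul_le_mul_of_nonneg_right hgood_card (mul_nonneg hη0 hε.le),
          mul_le_mul_of_nonneg_right h.card_mul_le hη0,
          mul_le_mul_of_nonneg_right hbad_card (mul_nonneg hε.le hM0)]

lemma yFn_div_mem {t : ℝ} (ht : t ∈ {t | ∃ c ∈ ω, |t - c| < r / 2}) : yFn r δ ω t / r ∈ I := by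
  have ⟨_, _, hr, _⟩ := h
  obtain ⟨c, hc, htc⟩ := ht
  rw [h.yFn_eq hc htc, mem_Ioo, lt_div_iff₀ hr, div_lt_iff₀ hr]
  rw [abs_sub_lt_iff] at htc
  constructor <;> linarith

lemma setOf_exists_abs_sub_lt_subset : {t | ∃ c ∈ ω, |t - c| < r / 2} ⊆ Ioo 0 L := by
  have ⟨_, _, _, _, _, _, _, hpos⟩ := h
  rintro t ⟨c, hc, htc⟩
  have := hpos c hc
  have := h.r_lt
  rw [abs_sub_lt_iff] at htc
  constructor <;> linarith

lemma integrableOn_layerSet {Ω' : Set (Fin 2 → ℝ)} (hΩ'm : MeasurableSet Ω')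
    (hΩ'b : IsBounded Ω') {Φ : (Fin 3 → ℝ) → ℝ → ℝ} (hΦ : Continuous (Function.uncurry Φ))
    {M : ℝ} (hM : ∀ x ∈ OmegaSet Ω' L, ∀ y ∈ I, |Φ x y| ≤ M) :
    IntegrableOn (fun x => Φ x (yFn r δ ω (x 2) / r)) (layerSet Ω' ω r) := by
  have hDm : MeasurableSet {t | ∃ c ∈ ω, |t - c| < r / 2} := by
    rw [setOf_exists_abs_sub_lt]
    exact Finset.measurableSet_biUnion _ fun _ _ => measurableSet_Ioo
  have hsub := h.setOf_exists_abs_sub_lt_subset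
  refine IntegrableOn.of_bound
    (isBounded_cylinderSet hΩ'b ((Metric.isBounded_Ioo 0 L).subset hsub)).measure_lt_top
    ?_ M (ae_restrict_of_forall_mem (measurableSet_cylinderSet hΩ'm hDm) fun x hx =>
      hM x ⟨hx.1, hsub hx.2⟩ _ (h.yFn_div_mem hx.2))
  exact (hΦ.measurable.comp (measurable_id.prodMk
    (((measurable_yFn r δ ω).comp (measurable_pi_apply 2)).div_const r))).aestronglyMeasurable

/-- Integrating the one-dimensional estimate over the slices `x' ∈ Ω'`. -/
lemma abs_integral_layerMeasure_sub_le {Ω' : Set (Fin 2 → ℝ)} (hΩ'm : MeasurableSet Ω')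
    (hΩ'b : IsBounded Ω') {Φ : (Fin 3 → ℝ) → ℝ → ℝ} (hΦ : Continuous (Function.uncurry Φ))
    {M η : ℝ} (hM0 : 0 ≤ M) (hη0 : 0 ≤ η) (hM : ∀ x ∈ OmegaSet Ω' L, ∀ y ∈ I, |Φ x y| ≤ M)
    (hη : ∀ x ∈ OmegaSet Ω' L, ∀ z ∈ OmegaSet Ω' L, dist x z ≤ 2 * ε →
      ∀ y ∈ I, |Φ x y - Φ z y| ≤ η) :
    |(∫ x, Φ x (yFn r δ ω (x 2) / r) ∂layerMeasure Ω' ω ε r)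
      - ∫ x in OmegaSet Ω' L, countFn L ε ω (x 2) * ∫ y in I, Φ x y|
      ≤ (L * η + ε * M) * volume.real Ω' := by
  have ⟨_, hε, hr, _⟩ := h
  have hint₁ := h.integrableOn_layerSet hΩ'm hΩ'b hΦ hM
  have hint₂ := integrableOn_countFn_mul L hε ω hΩ'b
    (continuous_setIntegral_Ioo hΦ (-(1 / 2)) (1 / 2))
  rw [layerSet_eq_cylinderSet] at hint₁
  rw [OmegaSet_eq_cylinderSet] at hint₂
  have hA := setIntegral_cylinderSet hint₁
  have hA' := integrableOn_setIntegral_cylinderSet hint₁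
  have hB := setIntegral_cylinderSet hint₂
  have hB' := integrableOn_setIntegral_cylinderSet hint₂
  simp only [snoc_apply_two] at hA hA' hB hB'
  rw [layerMeasure, integral_smul_measure, ENNReal.toReal_ofReal (div_pos hε hr).le,
    smul_eq_mul, layerSet_eq_cylinderSet, hA, OmegaSet_eq_cylinderSet, hB, ← integral_const_mul,
    ← integral_sub (hA'.const_mul _) hB', ← Real.norm_eq_abs]
  refine norm_setIntegral_le_of_norm_le_const hΩ'b.measure_lt_top fun x' hx' => ?_
  rw [Real.norm_eq_abs]
  exact h.abs_integral_layers_sub_integral_countFn_le (F := fun t y => Φ (Fin.snoc x' t) y)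
    (hΦ.comp ((continuous_const.finSnoc continuous_fst).prodMk continuous_snd)) hM0 hη0
    (fun s hs y hy => hM _ (snoc_mem_cylinderSet.2 ⟨hx', hs⟩) y hy)
    (fun s hs t ht hst y hy => hη _ (snoc_mem_cylinderSet.2 ⟨hx', hs⟩) _
      (snoc_mem_cylinderSet.2 ⟨hx', ht⟩) ((dist_snoc_snoc_le x' s t).trans hst) y hy)

end GoodLayers

end Layers

/-- mean-value property of oscillating test functions relative to the
layer measures: for `φ ∈ C(Ω̄ × Ī)` and `m_ε ⇀* n ℒ³⌊Ω`,
`∫_Ω |φ(x, y_ε(x₃)/r_ε)|² dm_ε → ∫_{Ω×I} |φ(x,y₃)|² n dx dy₃`. -/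
theorem stmt13 (Ω' : Set (Fin 2 → ℝ)) (hΩ'open : IsOpen Ω') (hΩ'bdd : IsBounded Ω')
    (L : ℝ) (ε r : ℕ → ℝ) (δ : ℝ) (ω : ℕ → Finset ℝ)
    (hgood : ∀ k, GoodLayers L (ε k) (r k) δ (ω k))
    (hε0 : Tendsto ε atTop (𝓝 0))
    (n : (Fin 3 → ℝ) → ℝ)
    (hn : NConv Ω' L ε ω n)
    (φ : (Fin 3 → ℝ) → ℝ → ℝ)
    (hφ : Continuous (fun p : (Fin 3 → ℝ) × ℝ => φ p.1 p.2)) :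
    Tendsto
      (fun k => ∫ x, (φ x (yFn (r k) δ (ω k) (x 2) / r k)) ^ 2
        ∂(layerMeasure Ω' (ω k) (ε k) (r k)))
      atTop
      (𝓝 (∫ x in OmegaSet Ω' L,
        (∫ y in Set.Ioo (-(1/2) : ℝ) (1/2), (φ x y) ^ 2) * n x)) := by
  have hΦ : Continuous (Function.uncurry fun x y => φ x y ^ 2) := hφ.pow 2
  have hΩb : IsBounded (OmegaSet Ω' L) := isBounded_cylinderSet hΩ'bdd (Metric.isBounded_Ioo 0 L)
  have hK : IsBounded (OmegaSet Ω' L ×ˢ I) := hΩb.prod (Metric.isBounded_Ioo _ _)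
  obtain ⟨M, hM0, hM⟩ := exists_abs_le_of_isBounded hΦ hK
  have hg := continuous_setIntegral_Ioo hΦ (-(1 / 2)) (1 / 2)
  have hcount := hn _
    ((hg.continuousOn.integrableOn_compact hΩb.isCompact_closure).mono_set subset_closure)
  have hdiff := tendsto_zero_of_forall_eventually_abs_le
    (by simpa using (hε0.mul_const M).mul_const (volume.real Ω')) (L * volume.real Ω')
    fun η hη => by
      obtain ⟨d, hd, hdη⟩ := exists_pos_forall_dist_lt_of_isBounded hΦ hK hη
      filter_upwards [hε0.eventually (gt_mem_nhds (half_pos hd))] with k hk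
      refine ((hgood k).abs_integral_layerMeasure_sub_le hΩ'open.measurableSet hΩ'bdd hΦ hM0
        hη.le (fun x hx y hy => hM (x, y) ⟨hx, hy⟩) fun x hx z hz hxz y hy =>
          (hdη (x, y) ⟨hx, hy⟩ (z, y) ⟨hz, hy⟩ ?_).le).trans_eq (by ring)
      simp only [Prod.dist_eq, dist_self, dist_nonneg, max_eq_left]
      linarith
  simpa only [sub_add_cancel, zero_add, mul_comm (n _)] using hdiff.add hcount
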